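/- Let n ≥ 1, let H₁, …, H_{n+1} ∈ (0,1), set H₀ = 1, let t > 0, and let k be a positive integer. Then the 2k-th moment of the n-times iterated fractional Brownian motion, namely ∫_ℝ x^{2k} · 2^n ∫₀^∞ ⋯ ∫₀^∞ g(x; s₁^{2H₁}) g(s₁; s₂^{2H₂}) ⋯ g(s_{n−1}; s_n^{2H_n}) g(s_n; t^{2H_{n+1}}) ds₁ ⋯ ds_n dx, equals 2^{n+1} t^{2k ∏_{j=1}^{n+1} H_j} · 2^{−k ∑_{r=0}^{n} ∏_{j=0}^{r} H_j} · ∏_{r=0}^{n} Γ(2k ∏_{j=0}^{r} H_j) / Γ(k ∏_{j=0}^{r} H_j). -/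

import Mathlib

open Real Set
open MeasureTheory

/-- Centered Gaussian density with variance `v`:
`g(x; v) = (2πv)^{-1/2} exp(−x²/(2v))`. -/
noncomputable def gauss (x v : ℝ) : ℝ :=
  (Real.sqrt (2 * Real.pi * v))⁻¹ * Real.exp (-x ^ 2 / (2 * v))

lemma gauss_nonneg (x v : ℝ) : 0 ≤ gauss x v := by
  unfold gauss; positivity

@[fun_prop]
lemma measurable_gauss {α : Type*} [MeasurableSpace α] {f g : α → ℝ}
    (hf : Measurable f) (hg : Measurable g) :
    Measurable fun x => gauss (f x) (g x) := by
  unfold gauss; fun_prop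

lemma gauss_eq (v : ℝ) (x : ℝ) :
    gauss x v = (Real.sqrt (2 * Real.pi * v))⁻¹ * Real.exp (-(2 * v)⁻¹ * x ^ 2) := by
  unfold gauss
  rw [show -x ^ 2 / (2 * v) = -(2 * v)⁻¹ * x ^ 2 by ring]

lemma core_integrable {a v : ℝ} (ha : -1 < a) (hv : 0 < v) :
    IntegrableOn (fun s : ℝ => s ^ a * gauss s v) (Ioi 0) := by
  have hb : (0 : ℝ) < (2 * v)⁻¹ := by positivity
  have h := (integrableOn_rpow_mul_exp_neg_mul_sq hb ha).const_mul
    (Real.sqrt (2 * Real.pi * v))⁻¹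
  exact IntegrableOn.congr_fun h (fun s _ => by rw [gauss_eq]; ring) measurableSet_Ioi

lemma core_value {a v : ℝ} (ha : 0 < a) (hv : 0 < v) :
    ∫ s in Ioi (0 : ℝ), s ^ (2 * a) * gauss s v
      = v ^ a * ((2 : ℝ) ^ a)⁻¹ * (Real.Gamma (2 * a) / Real.Gamma a) := by
  have hb : (0 : ℝ) < (2 * v)⁻¹ := by positivity
  have h1 : ∫ s in Ioi (0 : ℝ), s ^ (2 * a) * gauss s v
      = (Real.sqrt (2 * Real.pi * v))⁻¹ *
        ∫ s in Ioi (0 : ℝ), s ^ (2 * a) * Real.exp (-(2 * v)⁻¹ * s ^ ((2 : ℝ))) := by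
    rw [← integral_const_mul]
    refine setIntegral_congr_fun measurableSet_Ioi (fun s _ => ?_)
    rw [gauss_eq, Real.rpow_two]; ring
  rw [h1, integral_rpow_mul_exp_neg_mul_rpow two_pos (by linarith) hb]
  have h2 : ((2 * v)⁻¹ : ℝ) ^ (-(2 * a + 1) / 2) = (2 * v) ^ (a + 1 / 2) := by
    rw [← Real.rpow_neg_one (2 * v), ← Real.rpow_mul (by positivity)]
    congr 1
    ring
  rw [h2]
  have s2v : (0:ℝ) < Real.sqrt (2*v) := Real.sqrt_pos.mpr (by positivity)
  have spi : (0:ℝ) < Real.sqrt Real.pi := Real.sqrt_pos.mpr Real.pi_pos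
  have hGa : 0 < Real.Gamma a := Real.Gamma_pos_of_pos ha
  have hpa : (0:ℝ) < (2:ℝ) ^ (a:ℝ) := Real.rpow_pos_of_pos two_pos a
  have hpi : Real.sqrt (2*Real.pi*v) = Real.sqrt Real.pi * Real.sqrt (2*v) := by
    rw [show 2*Real.pi*v = Real.pi*(2*v) by ring, Real.sqrt_mul Real.pi_pos.le]
  have h3 : (2*v) ^ ((a + 1/2) : ℝ) = (2*v) ^ (a:ℝ) * Real.sqrt (2*v) := by
    rw [Real.rpow_add (by positivity), Real.sqrt_eq_rpow]
  have hG : Real.Gamma ((2*a+1)/2)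
      = Real.Gamma (2*a) * 2 ^ (1-2*a : ℝ) * Real.sqrt Real.pi / Real.Gamma a := by
    rw [show (2*a+1)/2 = a + 1/2 by ring, eq_div_iff hGa.ne', mul_comm,
      Real.Gamma_mul_Gamma_add_half]
  have h4 : (2*v) ^ (a:ℝ) = 2 ^ (a:ℝ) * v ^ a := Real.mul_rpow two_pos.le hv.le
  have h5 : (2:ℝ) ^ (1-2*a : ℝ) = 2 * ((2:ℝ)^(a:ℝ))⁻¹ * ((2:ℝ)^(a:ℝ))⁻¹ := by
    rw [show (1-2*a:ℝ) = 1 + (-a) + (-a) by ring, Real.rpow_add two_pos,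
      Real.rpow_add two_pos, Real.rpow_one, Real.rpow_neg two_pos.le]
  rw [hpi, h3, hG, h4, h5]
  field_simp

/-- Density of the `n`-times iterated fractional Brownian motion
`I^n_F(t) = B¹_{H₁}(|B²_{H₂}(… |B^{n+1}_{H_{n+1}}(t)| …)|)`, where `Hs j` is the Hurst
parameter `H_j`.  It is the `n`-fold integral
`2^n ∫₀^∞⋯∫₀^∞ g(x; s₁^{2H₁}) g(s₁; s₂^{2H₂}) ⋯ g(s_n; t^{2H_{n+1}}) ds₁⋯ds_n`,
written recursively by integrating out the innermost (guiding) process. -/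
noncomputable def densIterFBM (Hs : ℕ → ℝ) : ℕ → ℝ → ℝ → ℝ
  | 0, x, t => gauss x (t ^ (2 * Hs 1))
  | n + 1, x, t =>
      2 * ∫ s in Set.Ioi (0 : ℝ), densIterFBM Hs n x s * gauss s (t ^ (2 * Hs (n + 2)))

lemma dens_nonneg (Hs : ℕ → ℝ) : ∀ n x t, 0 ≤ densIterFBM Hs n x t
  | 0, x, t => gauss_nonneg _ _
  | n + 1, x, t => by
    rw [densIterFBM]
    refine mul_nonneg two_pos.le (setIntegral_nonneg measurableSet_Ioi fun s _ => ?_)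
    exact mul_nonneg (dens_nonneg Hs n x s) (gauss_nonneg _ _)

lemma measurable_dens (Hs : ℕ → ℝ) (n : ℕ) :
    Measurable fun p : ℝ × ℝ => densIterFBM Hs n p.1 p.2 := by
  induction n with
  | zero =>
    simp only [densIterFBM]
    fun_prop
  | succ n ih =>
    simp only [densIterFBM]
    have hm : Measurable fun q : (ℝ × ℝ) × ℝ =>
        densIterFBM Hs n q.1.1 q.2 * gauss q.2 (q.1.2 ^ (2 * Hs (n + 2))) := by
      refine Measurable.mul ?_ (by fun_prop)
      exact Measurable.comp (g := fun p : ℝ × ℝ => densIterFBM Hs n p.1 p.2)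
        (f := fun q : (ℝ × ℝ) × ℝ => (q.1.1, q.2)) ih (by fun_prop)
    have hsm := (hm.stronglyMeasurable.integral_prod_right'
      (ν := volume.restrict (Set.Ioi (0:ℝ)))).measurable
    exact measurable_const.mul hsm

noncomputable def Cn (Hs : ℕ → ℝ) (k : ℕ) (n : ℕ) : ℝ :=
  2 ^ (n + 1) *
    ((2 : ℝ) ^ ((k : ℝ) * ∑ r ∈ Finset.range (n + 1), ∏ j ∈ Finset.range (r + 1), Hs j))⁻¹ *
    ∏ r ∈ Finset.range (n + 1),
      Real.Gamma (2 * k * ∏ j ∈ Finset.range (r + 1), Hs j) /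
        Real.Gamma (k * ∏ j ∈ Finset.range (r + 1), Hs j)

lemma Cn_pos (Hs : ℕ → ℝ) (k n : ℕ) (hk : 0 < k) (hpos : ∀ j, j ≤ n + 1 → 0 < Hs j) :
    0 < Cn Hs k n := by
  have hk' : (0:ℝ) < (k:ℝ) := by exact_mod_cast hk
  refine mul_pos (mul_pos (by positivity) (by positivity)) (Finset.prod_pos fun r hr => ?_)
  have hr' : r ≤ n := by simpa [Nat.lt_succ_iff] using hr
  have hPr : 0 < ∏ j ∈ Finset.range (r + 1), Hs j :=
    Finset.prod_pos fun j hj => hpos j (by simp [Nat.lt_succ_iff] at hj; omega)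
  exact div_pos (Real.Gamma_pos_of_pos (by positivity)) (Real.Gamma_pos_of_pos (by positivity))

lemma main_moment (Hs : ℕ → ℝ) (k : ℕ) (hk : 0 < k) (hH0 : Hs 0 = 1) :
    ∀ n, (∀ j, j ≤ n + 1 → 0 < Hs j) → ∀ t : ℝ, 0 < t →
      Integrable (fun x => x ^ (2 * k) * densIterFBM Hs n x t) ∧
      ∫ x, x ^ (2 * k) * densIterFBM Hs n x t
        = Cn Hs k n * t ^ (2 * (k : ℝ) * ∏ j ∈ Finset.range (n + 2), Hs j) := by
  intro n
  induction n with
  | zero =>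
    intro hpos t ht
    set v : ℝ := t ^ (2 * Hs 1) with hv_def
    have hv : 0 < v := Real.rpow_pos_of_pos ht _
    have hb : (0:ℝ) < (2 * v)⁻¹ := by positivity
    have hs2k : (-1:ℝ) < ((2 * k : ℕ) : ℝ) := by
      have : (0:ℝ) ≤ ((2 * k : ℕ) : ℝ) := Nat.cast_nonneg _
      linarith
    have e1 : ∀ x : ℝ, x ^ (2 * k) * densIterFBM Hs 0 x t
        = (Real.sqrt (2 * Real.pi * v))⁻¹
          * (x ^ (((2 * k : ℕ)) : ℝ) * Real.exp (-(2 * v)⁻¹ * x ^ 2)) := by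
      intro x
      simp only [densIterFBM]
      rw [gauss_eq, Real.rpow_natCast]
      ring
    have hint : Integrable (fun x => x ^ (2 * k) * densIterFBM Hs 0 x t) := by
      rw [funext e1]
      exact (integrable_rpow_mul_exp_neg_mul_sq hb hs2k).const_mul _
    refine ⟨hint, ?_⟩
    have e2 : ∀ x : ℝ, x ^ (2 * k) * densIterFBM Hs 0 x t
        = (fun u => u ^ (2 * k) * gauss u v) |x| := by
      intro x
      simp only [densIterFBM]
      have h1 : |x| ^ (2 * k) = x ^ (2 * k) := by
        rw [← abs_pow]
        exact abs_of_nonneg (Even.pow_nonneg ⟨k, by ring⟩ x)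
      have h2 : gauss |x| v = gauss x v := by unfold gauss; rw [sq_abs]
      simp only [h1, h2]
      rfl
    have e3 : ∫ s in Ioi (0:ℝ), s ^ (2 * k) * gauss s v
        = ∫ s in Ioi (0:ℝ), s ^ (2 * ((k:ℝ))) * gauss s v := by
      refine setIntegral_congr_fun measurableSet_Ioi (fun s _ => ?_)
      rw [show (2 * ((k:ℝ))) = (((2 * k : ℕ)):ℝ) by push_cast; ring, Real.rpow_natCast]
    have hkR : (0:ℝ) < (k:ℝ) := by exact_mod_cast hk
    calc ∫ x : ℝ, x ^ (2 * k) * densIterFBM Hs 0 x t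
        = ∫ x : ℝ, (fun u => u ^ (2 * k) * gauss u v) |x| := by
          rw [funext e2]
      _ = 2 * ∫ s in Ioi (0:ℝ), s ^ (2 * k) * gauss s v :=
          integral_comp_abs (f := fun u => u ^ (2 * k) * gauss u v)
      _ = 2 * (v ^ ((k:ℝ)) * ((2:ℝ) ^ ((k:ℝ)))⁻¹
            * (Real.Gamma (2 * (k:ℝ)) / Real.Gamma ((k:ℝ)))) := by
          rw [e3, core_value hkR hv]
      _ = Cn Hs k 0 * t ^ (2 * (k : ℝ) * ∏ j ∈ Finset.range 2, Hs j) := by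
          unfold Cn
          simp only [Finset.sum_range_one, Finset.prod_range_one, Finset.prod_range_succ,
            Finset.prod_range_zero, hH0, mul_one, one_mul, zero_add, pow_one]
          rw [← Real.rpow_mul ht.le, show 2 * Hs 1 * (k:ℝ) = 2 * (k:ℝ) * Hs 1 by ring]
          ring
  | succ n ih =>
    intro hpos t ht
    have hpos' : ∀ j, j ≤ n + 1 → 0 < Hs j := fun j hj => hpos j (by omega)
    have hkR : (0:ℝ) < (k:ℝ) := by exact_mod_cast hk
    set v : ℝ := t ^ (2 * Hs (n + 2)) with hv_def
    have hv : 0 < v := Real.rpow_pos_of_pos ht _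
    have hP : 0 < ∏ j ∈ Finset.range (n + 2), Hs j :=
      Finset.prod_pos fun j hj => hpos j (by simp [Nat.lt_succ_iff] at hj; omega)
    set P : ℝ := ∏ j ∈ Finset.range (n + 2), Hs j with hP_def
    set a : ℝ := (k : ℝ) * P with ha_def
    have ha : 0 < a := mul_pos hkR hP
    have hC : 0 < Cn Hs k n := Cn_pos Hs k n hk hpos'
    set ν : Measure ℝ := volume.restrict (Ioi (0:ℝ)) with hν_def
    set G : ℝ × ℝ → ℝ :=
      fun p => p.1 ^ (2 * k) * densIterFBM Hs n p.1 p.2 * gauss p.2 v with hG_def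
    have hGnn : ∀ p, 0 ≤ G p := fun p =>
      mul_nonneg (mul_nonneg (Even.pow_nonneg ⟨k, by ring⟩ _) (dens_nonneg Hs n _ _))
        (gauss_nonneg _ _)
    have hGm : Measurable G :=
      ((measurable_fst.pow_const _).mul (measurable_dens Hs n)).mul
        (measurable_gauss measurable_snd measurable_const)
    -- the inner lintegral over x for s > 0
    have hinner : ∀ s : ℝ, s ∈ Ioi (0:ℝ) →
        (∫⁻ x : ℝ, ENNReal.ofReal (G (x, s)))
          = ENNReal.ofReal (Cn Hs k n * (s ^ (2 * a) * gauss s v)) := by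
      intro s hs
      obtain ⟨hint, hval⟩ := ih hpos' s hs
      have hslice : Measurable fun x : ℝ => densIterFBM Hs n x s :=
        Measurable.comp (g := fun p : ℝ × ℝ => densIterFBM Hs n p.1 p.2)
          (f := fun x : ℝ => (x, s)) (measurable_dens Hs n) (by fun_prop)
      have hxm : Measurable fun x : ℝ => x ^ (2 * k) * densIterFBM Hs n x s :=
        (measurable_id.pow_const _).mul hslice
      have hxnn : ∀ x : ℝ, 0 ≤ x ^ (2 * k) * densIterFBM Hs n x s := fun x =>
        mul_nonneg (Even.pow_nonneg ⟨k, by ring⟩ _) (dens_nonneg Hs n _ _)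
      calc ∫⁻ x : ℝ, ENNReal.ofReal (G (x, s))
          = ∫⁻ x : ℝ, ENNReal.ofReal (x ^ (2 * k) * densIterFBM Hs n x s)
              * ENNReal.ofReal (gauss s v) := by
            refine lintegral_congr fun x => ?_
            rw [hG_def, ← ENNReal.ofReal_mul (hxnn x)]
        _ = (∫⁻ x : ℝ, ENNReal.ofReal (x ^ (2 * k) * densIterFBM Hs n x s))
              * ENNReal.ofReal (gauss s v) :=
            lintegral_mul_const _ (by exact hxm.ennreal_ofReal)
        _ = ENNReal.ofReal (∫ x : ℝ, x ^ (2 * k) * densIterFBM Hs n x s)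
              * ENNReal.ofReal (gauss s v) := by
            rw [ofReal_integral_eq_lintegral_ofReal hint (ae_of_all _ hxnn)]
        _ = ENNReal.ofReal (Cn Hs k n * (s ^ (2 * a) * gauss s v)) := by
            rw [hval, ← ENNReal.ofReal_mul
              (mul_nonneg hC.le (Real.rpow_nonneg (le_of_lt (mem_Ioi.mp hs)) _))]
            congr 1
            rw [show 2 * (k:ℝ) * P = 2 * a by rw [ha_def]; ring]
            ring
    -- the product lintegral is finite and computable
    have hL : ∫⁻ p : ℝ × ℝ, ENNReal.ofReal (G p) ∂((volume : Measure ℝ).prod ν)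
        = ENNReal.ofReal (Cn Hs k n
            * (v ^ a * ((2:ℝ) ^ a)⁻¹ * (Real.Gamma (2 * a) / Real.Gamma a))) := by
      rw [MeasureTheory.lintegral_prod_symm _ (hGm.ennreal_ofReal.aemeasurable)]
      have hcongr : ∫⁻ s : ℝ, (∫⁻ x : ℝ, ENNReal.ofReal (G (x, s))) ∂ν
          = ∫⁻ s : ℝ, ENNReal.ofReal (Cn Hs k n * (s ^ (2 * a) * gauss s v)) ∂ν := by
        rw [hν_def]
        exact setLIntegral_congr_fun measurableSet_Ioi hinner
      rw [hcongr]
      have hint2 : Integrable (fun s : ℝ => Cn Hs k n * (s ^ (2 * a) * gauss s v)) ν :=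
        (core_integrable (by linarith) hv).const_mul _
      have hnn2 : 0 ≤ᵐ[ν] fun s : ℝ => Cn Hs k n * (s ^ (2 * a) * gauss s v) := by
        filter_upwards [ae_restrict_mem measurableSet_Ioi] with s hs
        have h0 : (0:ℝ) ≤ s ^ (2 * a) := Real.rpow_nonneg (le_of_lt hs) _
        exact mul_nonneg hC.le (mul_nonneg h0 (gauss_nonneg _ _))
      rw [← ofReal_integral_eq_lintegral_ofReal hint2 hnn2]
      congr 1
      rw [hν_def, integral_const_mul, core_value ha hv]
    have hGint : Integrable G ((volume : Measure ℝ).prod ν) := by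
      refine ⟨hGm.aestronglyMeasurable, ?_⟩
      rw [hasFiniteIntegral_iff_ofReal (ae_of_all _ hGnn), hL]
      exact ENNReal.ofReal_lt_top
    have e3 : (fun x : ℝ => x ^ (2 * k) * densIterFBM Hs (n + 1) x t)
        = fun x : ℝ => 2 * ∫ s in Ioi (0:ℝ), G (x, s) := by
      funext x
      simp only [densIterFBM]
      have : ∫ s in Ioi (0:ℝ), G (x, s)
          = x ^ (2 * k) * ∫ s in Ioi (0:ℝ), densIterFBM Hs n x s * gauss s v := by
        rw [← integral_const_mul]
        refine setIntegral_congr_fun measurableSet_Ioi (fun s _ => ?_)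
        rw [hG_def]; ring
      rw [this, hv_def]
      ring
    have hintfinal : Integrable (fun x : ℝ => x ^ (2 * k) * densIterFBM Hs (n + 1) x t) := by
      rw [e3]
      exact (hGint.integral_prod_left).const_mul 2
    refine ⟨hintfinal, ?_⟩
    calc ∫ x : ℝ, x ^ (2 * k) * densIterFBM Hs (n + 1) x t
        = ∫ x : ℝ, 2 * ∫ s in Ioi (0:ℝ), G (x, s) := by rw [e3]
      _ = 2 * ∫ x : ℝ, ∫ s in Ioi (0:ℝ), G (x, s) := integral_const_mul 2 _
      _ = 2 * ∫ s in Ioi (0:ℝ), ∫ x : ℝ, G (x, s) := by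
          rw [MeasureTheory.integral_integral_swap (f := fun x s => G (x, s)) hGint]
      _ = 2 * ∫ s in Ioi (0:ℝ), Cn Hs k n * (s ^ (2 * a) * gauss s v) := by
          congr 1
          refine setIntegral_congr_fun measurableSet_Ioi (fun s hs => ?_)
          obtain ⟨hint, hval⟩ := ih hpos' s hs
          have : ∫ x : ℝ, G (x, s)
              = (∫ x : ℝ, x ^ (2 * k) * densIterFBM Hs n x s) * gauss s v := by
            rw [← integral_mul_const]
          rw [this, hval, show 2 * (k:ℝ) * P = 2 * a by rw [ha_def]; ring]
          ring
      _ = 2 * (Cn Hs k n * (v ^ a * ((2:ℝ) ^ a)⁻¹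
            * (Real.Gamma (2 * a) / Real.Gamma a))) := by
          rw [integral_const_mul, core_value ha hv]
      _ = Cn Hs k (n + 1) * t ^ (2 * (k : ℝ) * ∏ j ∈ Finset.range (n + 3), Hs j) := by
          have hvP : v ^ a = t ^ (2 * (k : ℝ) * ∏ j ∈ Finset.range (n + 3), Hs j) := by
            rw [hv_def, ← Real.rpow_mul ht.le]
            congr 1
            rw [Finset.prod_range_succ, ← hP_def, ha_def]
            ring
          have hrec : Cn Hs k (n + 1)
              = 2 * Cn Hs k n * ((2:ℝ) ^ a)⁻¹
                  * (Real.Gamma (2 * a) / Real.Gamma a) := by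
            unfold Cn
            rw [Finset.sum_range_succ
                (f := fun r => ∏ j ∈ Finset.range (r + 1), Hs j) (n := n + 1),
              Finset.prod_range_succ
                (fun r => Real.Gamma (2 * k * ∏ j ∈ Finset.range (r + 1), Hs j) /
                  Real.Gamma (k * ∏ j ∈ Finset.range (r + 1), Hs j)) (n + 1)]
            simp only [show n + 1 + 1 = n + 2 from rfl]
            rw [← hP_def, mul_add, Real.rpow_add two_pos, mul_inv, pow_succ,
              show 2 * (k:ℝ) * P = 2 * a by rw [ha_def]; ring,
              show (k:ℝ) * P = a from ha_def.symm]
            ring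
          rw [hvP, hrec]
          ring

/-- Even-order moments of the `n`-times iterated fractional Brownian motion:
for `n ≥ 1`, `H₀ = 1`, `H_j ∈ (0,1)` for `1 ≤ j ≤ n+1`, `t > 0` and `k ∈ ℕ`, `k ≥ 1`,
`E (I^n_F(t))^{2k} = 2^{n+1} t^{2k ∏_{j=1}^{n+1} H_j} 2^{−k ∑_{r=0}^{n} ∏_{j=0}^{r} H_j}
  ∏_{r=0}^{n} Γ(2k ∏_{j=0}^{r} H_j)/Γ(k ∏_{j=0}^{r} H_j)`. -/
theorem iterated_fbm_even_moments_general (n : ℕ) (hn : 1 ≤ n) (Hs : ℕ → ℝ)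
    (hH0 : Hs 0 = 1) (hHs : ∀ j, 1 ≤ j → j ≤ n + 1 → Hs j ∈ Set.Ioo (0 : ℝ) 1)
    (t : ℝ) (ht : 0 < t) (k : ℕ) (hk : 0 < k) :
    ∫ x : ℝ, x ^ (2 * k) * densIterFBM Hs n x t
      = (2 : ℝ) ^ (n + 1) * t ^ (2 * (k : ℝ) * ∏ j ∈ Finset.Icc 1 (n + 1), Hs j) *
          ((2 : ℝ) ^ ((k : ℝ) * ∑ r ∈ Finset.range (n + 1),
            ∏ j ∈ Finset.range (r + 1), Hs j))⁻¹ *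
          ∏ r ∈ Finset.range (n + 1),
            Real.Gamma (2 * k * ∏ j ∈ Finset.range (r + 1), Hs j) /
              Real.Gamma (k * ∏ j ∈ Finset.range (r + 1), Hs j) := by
  have hpos : ∀ j, j ≤ n + 1 → 0 < Hs j := by
    intro j hj
    rcases Nat.eq_zero_or_pos j with h0 | h1
    · rw [h0, hH0]; exact one_pos
    · exact (hHs j h1 hj).1
  obtain ⟨-, hval⟩ := main_moment Hs k hk hH0 n hpos t ht
  rw [hval]
  have hprod : ∏ j ∈ Finset.range (n + 2), Hs j = ∏ j ∈ Finset.Icc 1 (n + 1), Hs j := by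
    rw [Finset.range_eq_Ico, Finset.prod_eq_prod_Ico_succ_bot (by omega) Hs, hH0, one_mul,
      show n + 2 = n + 1 + 1 from rfl, Finset.Ico_add_one_right_eq_Icc]
  rw [hprod]
  unfold Cn
  ring
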